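/- C is hyperconnexive: for all formulas A and B, the converse of Boethius' thesis is a theorem of C, i.e., the sequent ⇒ ∼(A → ∼B) → (A → B) is derivable in G3C. -/

import Mathlib

/-- Formulas of the connexive logic C: propositional variables, strong
negation `∼`, conjunction, disjunction and implication. -/
inductive Formula : Type
  | var : Nat → Formula
  | snot : Formula → Formula
  | and : Formula → Formula → Formula
  | or : Formula → Formula → Formula
  | imp : Formula → Formula → Formula
deriving DecidableEq
/-- Derivability of sequents `Γ ⇒ A` (with `Γ` a finite multiset of formulas)
in the sequent calculus `G3C` for the connexive logic `C`. -/
inductive Gder : Multiset Formula → Formula → Prop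
  | ax {Γ n} : Gder (.var n ::ₘ Γ) (.var n)
  | axSnot {Γ n} : Gder (.snot (.var n) ::ₘ Γ) (.snot (.var n))
  | andR {Γ A B} : Gder Γ A → Gder Γ B → Gder Γ (.and A B)
  | andL {Γ A B C} : Gder (A ::ₘ B ::ₘ Γ) C → Gder (.and A B ::ₘ Γ) C
  | orR₁ {Γ A B} : Gder Γ A → Gder Γ (.or A B)
  | orR₂ {Γ A B} : Gder Γ B → Gder Γ (.or A B)
  | orL {Γ A B C} : Gder (A ::ₘ Γ) C → Gder (B ::ₘ Γ) C → Gder (.or A B ::ₘ Γ) C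
  | impR {Γ A B} : Gder (A ::ₘ Γ) B → Gder Γ (.imp A B)
  | impL {Γ A B C} : Gder (.imp A B ::ₘ Γ) A → Gder (B ::ₘ Γ) C → Gder (.imp A B ::ₘ Γ) C
  | snotSnotR {Γ A} : Gder Γ A → Gder Γ (.snot (.snot A))
  | snotSnotL {Γ A C} : Gder (A ::ₘ Γ) C → Gder (.snot (.snot A) ::ₘ Γ) C
  | snotAndR₁ {Γ A B} : Gder Γ (.snot A) → Gder Γ (.snot (.and A B))
  | snotAndR₂ {Γ A B} : Gder Γ (.snot B) → Gder Γ (.snot (.and A B))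
  | snotAndL {Γ A B C} : Gder (.snot A ::ₘ Γ) C → Gder (.snot B ::ₘ Γ) C →
      Gder (.snot (.and A B) ::ₘ Γ) C
  | snotOrR {Γ A B} : Gder Γ (.snot A) → Gder Γ (.snot B) → Gder Γ (.snot (.or A B))
  | snotOrL {Γ A B C} : Gder (.snot A ::ₘ .snot B ::ₘ Γ) C → Gder (.snot (.or A B) ::ₘ Γ) C
  | snotImpR {Γ A B} : Gder (A ::ₘ Γ) (.snot B) → Gder Γ (.snot (.imp A B))
  | snotImpL {Γ A B C} : Gder (.snot (.imp A B) ::ₘ Γ) A → Gder (.snot B ::ₘ Γ) C →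
      Gder (.snot (.imp A B) ::ₘ Γ) C

/-! Identity sequents `Γ, A ⇒ A` are derivable for every formula `A`, by induction on `A`
carried out simultaneously for `A` and `∼A`. The converse of Boethius' thesis reduces, by (R→)
twice, to `∼(A → ∼B), A ⇒ B`, which is a single (L∼→) step: its premises `∼(A → ∼B), A ⇒ A`
and `∼∼B, A ⇒ B` are identity sequents, the second after (L∼∼). -/

namespace Gder

theorem of_cons_swap {Γ : Multiset Formula} {A B C : Formula}
    (h : Gder (B ::ₘ A ::ₘ Γ) C) : Gder (A ::ₘ B ::ₘ Γ) C := by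
  rwa [Multiset.cons_swap]

theorem refl_and_snot_refl (A : Formula) :
    (∀ Γ, Gder (A ::ₘ Γ) A) ∧ ∀ Γ, Gder (.snot A ::ₘ Γ) (.snot A) := by
  induction A with
  | var n => exact ⟨fun _ => ax, fun _ => axSnot⟩
  | snot A ih => exact ⟨ih.2, fun _ => snotSnotR (snotSnotL (ih.1 _))⟩
  | and A B ihA ihB =>
    exact ⟨fun _ => andL (andR (ihA.1 _) (of_cons_swap (ihB.1 _))),
      fun _ => snotAndL (snotAndR₁ (ihA.2 _)) (snotAndR₂ (ihB.2 _))⟩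
  | or A B ihA ihB =>
    exact ⟨fun _ => orL (orR₁ (ihA.1 _)) (orR₂ (ihB.1 _)),
      fun _ => snotOrL (snotOrR (ihA.2 _) (of_cons_swap (ihB.2 _)))⟩
  | imp A B ihA ihB =>
    exact ⟨fun _ => impR (of_cons_swap (impL (of_cons_swap (ihA.1 _)) (ihB.1 _))),
      fun _ => snotImpR (of_cons_swap (snotImpL (of_cons_swap (ihA.1 _)) (ihB.2 _)))⟩

theorem refl (A : Formula) (Γ : Multiset Formula) : Gder (A ::ₘ Γ) A :=
  (refl_and_snot_refl A).1 Γ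

end Gder

/-- `C` is hyperconnexive: the converse of Boethius' thesis
`∼(A → ∼B) → (A → B)` is a theorem of `C`. -/
theorem C_hyperconnexive (A B : Formula) :
    Gder 0 (.imp (.snot (.imp A (.snot B))) (.imp A B)) :=
  .impR <| .impR <| .of_cons_swap <|
    .snotImpL (.of_cons_swap (.refl A _)) (.snotSnotL (.refl B _))
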